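/- arXiv:2505.06114 — 2 statements merged into one kernel-verified Lean document; each statement's English description precedes it below -/
import Mathlib

section
/- Let E be a real inner product space which is a complete normed space, let f : E → ℝ, and let f' : E → E be such that f has gradient f' x at every x (HasGradientAt). Suppose f' is Lipschitz with constant L > 0, let ε > 0, let x ∈ E with ‖f' x‖² ≥ ε, let 0 < η ≤ 2/L, and set g = (√ε / ‖f' x‖) • f' x. Then f (x − η • g) ≤ f x. -/
/-!
By the descent lemma, an `L`-Lipschitz gradient gives
`f (x - η • g) ≤ f x - η ⟪f' x, g⟫ + L η² ‖g‖² / 2`, so the step does not increase `f` as soon as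
`L η ‖g‖² / 2 ≤ ⟪f' x, g⟫`. For the renormalized gradient `‖g‖ = √ε` and
`⟪f' x, g⟫ = √ε ‖f' x‖ ≥ ε`, while `L η / 2 ≤ 1`.
-/

open Real InnerProductSpace

section DescentLemma

variable {E : Type*} [NormedAddCommGroup E] [NormedSpace ℝ E]
  {f : E → ℝ} {f' : E → E →L[ℝ] ℝ} {L : ℝ}

theorem hasDerivAt_comp_add_smul (hf : ∀ x, HasFDerivAt f (f' x) x) (x v : E) (t : ℝ) :
    HasDerivAt (fun s : ℝ => f (x + s • v)) (f' (x + t • v) v) t := by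
  have hline : HasDerivAt (fun s : ℝ => x + s • v) v t := by
    simpa using ((hasDerivAt_id t).smul_const v).const_add x
  exact (hf _).comp_hasDerivAt t hline

theorem sub_apply_le_of_lipschitz (hlip : ∀ x y, ‖f' x - f' y‖ ≤ L * ‖x - y‖)
    (x v : E) {t : ℝ} (ht : 0 ≤ t) :
    f' (x + t • v) v - f' x v ≤ L * t * ‖v‖ ^ 2 :=
  calc f' (x + t • v) v - f' x v = (f' (x + t • v) - f' x) v := rfl
    _ ≤ ‖f' (x + t • v) - f' x‖ * ‖v‖ := (le_abs_self _).trans ((f' _ - f' x).le_opNorm v)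
    _ ≤ L * ‖(x + t • v) - x‖ * ‖v‖ := by gcongr; exact hlip _ _
    _ = L * t * ‖v‖ ^ 2 := by
      rw [add_sub_cancel_left, norm_smul, Real.norm_of_nonneg ht]; ring

theorem le_add_fderiv_add_lipschitz (hf : ∀ x, HasFDerivAt f (f' x) x)
    (hlip : ∀ x y, ‖f' x - f' y‖ ≤ L * ‖x - y‖) (x v : E) :
    f (x + v) ≤ f x + f' x v + L / 2 * ‖v‖ ^ 2 := by
  set φ : ℝ → ℝ := fun t => f (x + t • v) - t * f' x v - L * t ^ 2 / 2 * ‖v‖ ^ 2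
  have hφ (t : ℝ) : HasDerivAt φ (f' (x + t • v) v - f' x v - L * t * ‖v‖ ^ 2) t := by
    have hsq := ((hasDerivAt_pow 2 t).const_mul L).div_const 2 |>.mul_const (‖v‖ ^ 2)
    refine (((hasDerivAt_comp_add_smul hf x v t).sub
      ((hasDerivAt_id t).mul_const (f' x v))).sub hsq).congr_deriv ?_
    simp only [Nat.cast_ofNat]
    ring
  have hanti : AntitoneOn φ (Set.Ici 0) := by
    refine antitoneOn_of_hasDerivWithinAt_nonpos (convex_Ici 0)
      (Differentiable.continuous fun t => (hφ t).differentiableAt).continuousOn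
      (fun t _ => (hφ t).hasDerivWithinAt) ?_
    intro t ht
    rw [interior_Ici] at ht
    linarith [sub_apply_le_of_lipschitz hlip x v ht.le]
  have := hanti Set.self_mem_Ici (Set.mem_Ici.2 zero_le_one) zero_le_one
  simp only [φ, one_smul, zero_smul, add_zero] at this
  linarith

end DescentLemma

section Gradient

variable {E : Type*} [NormedAddCommGroup E] [InnerProductSpace ℝ E]

theorem le_add_inner_add_lipschitz [CompleteSpace E] {f : E → ℝ} {f' : E → E} {L : ℝ}
    (hf : ∀ x, HasGradientAt f (f' x) x) (hlip : ∀ x y, ‖f' x - f' y‖ ≤ L * ‖x - y‖) (x v : E) :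
    f (x + v) ≤ f x + ⟪f' x, v⟫_ℝ + L / 2 * ‖v‖ ^ 2 :=
  le_add_fderiv_add_lipschitz (f' := fun x => toDual ℝ E (f' x)) (fun x => (hf x).hasFDerivAt)
    (fun x y => by rw [← map_sub, LinearIsometryEquiv.norm_map]; exact hlip x y) x v

theorem le_of_mul_norm_sq_le_inner [CompleteSpace E] {f : E → ℝ} {f' : E → E} {L : ℝ}
    (hf : ∀ x, HasGradientAt f (f' x) x) (hlip : ∀ x y, ‖f' x - f' y‖ ≤ L * ‖x - y‖)
    {x g : E} {η : ℝ} (hη : 0 ≤ η) (hg : L * η / 2 * ‖g‖ ^ 2 ≤ ⟪f' x, g⟫_ℝ) :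
    f (x - η • g) ≤ f x := by
  have h := le_add_inner_add_lipschitz hf hlip x (-(η • g))
  rw [← sub_eq_add_neg, inner_neg_right, real_inner_smul_right, norm_neg, norm_smul,
    Real.norm_of_nonneg hη] at h
  nlinarith [mul_le_mul_of_nonneg_left hg hη]

theorem norm_smul_div_norm {a : E} (ha : a ≠ 0) {c : ℝ} (hc : 0 ≤ c) :
    ‖(c / ‖a‖) • a‖ = c := by
  rw [norm_smul, norm_div, norm_norm, Real.norm_of_nonneg hc,
    div_mul_cancel₀ _ (norm_ne_zero_iff.2 ha)]

theorem real_inner_smul_div_norm_right (a : E) (c : ℝ) : ⟪a, (c / ‖a‖) • a⟫_ℝ = c * ‖a‖ := by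
  rw [real_inner_smul_right, real_inner_self_eq_norm_sq]
  rcases eq_or_ne ‖a‖ 0 with h | h
  · simp [h]
  · field_simp

end Gradient

theorem fic_step_sufficient_decrease
    {E : Type*} [NormedAddCommGroup E] [InnerProductSpace ℝ E] [CompleteSpace E]
    (f : E → ℝ) (f' : E → E) (hgrad : ∀ x, HasGradientAt f (f' x) x)
    (L : ℝ) (hL : 0 < L) (hlip : ∀ x y : E, ‖f' x - f' y‖ ≤ L * ‖x - y‖)
    (ε : ℝ) (hε : 0 < ε) (x : E) (hx : ε ≤ ‖f' x‖ ^ 2)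
    (η : ℝ) (hη : 0 < η) (hη2 : η ≤ 2 / L)
    (g : E) (hg : g = (Real.sqrt ε / ‖f' x‖) • f' x) :
    f (x - η • g) ≤ f x := by
  have hsqrt : √ε ≤ ‖f' x‖ := (sqrt_le_sqrt hx).trans_eq (sqrt_sq (norm_nonneg _))
  have hne : f' x ≠ 0 := norm_pos_iff.1 ((sqrt_pos.2 hε).trans_le hsqrt)
  have hLη : L * η / 2 ≤ 1 := by rw [le_div_iff₀ hL] at hη2; linarith
  apply le_of_mul_norm_sq_le_inner hgrad hlip hη.le
  rw [hg, norm_smul_div_norm hne (sqrt_nonneg ε), real_inner_smul_div_norm_right, sq_sqrt hε.le]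
  calc L * η / 2 * ε ≤ ε := mul_le_of_le_one_left hε.le hLη
    _ = √ε * √ε := (mul_self_sqrt hε.le).symm
    _ ≤ √ε * ‖f' x‖ := by gcongr
end

section
/- Let E be a real inner product space which is a complete normed space, let f : E → ℝ, and let f' : E → E be such that f has gradient f' x at every x (HasGradientAt) and f' is Lipschitz with constant L ≥ 0. Let B ∈ ℝ satisfy B ≤ f z for all z ∈ E. Let η > 0, ε ≥ 0, and let θ : ℕ → E and g : ℕ → E satisfy θ (t+1) = θ t − η • g t and ‖g t‖² ≤ ε for all t. Then for every T ≥ 1, (1/T) · Σ_{t=0}^{T−1} ⟪f' (θ t), g t⟫ ≤ (f (θ 0) − B)/(η · T) + (L · ε · η)/2. -/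
open scoped RealInnerProductSpace

/-!
An `L`-Lipschitz gradient makes `f` lie below its quadratic model, so each step
`θ (t + 1) = θ t - η • g t` gives `η ⟪f' (θ t), g t⟫ ≤ f (θ t) - f (θ (t + 1)) + L η² ε / 2`.
Summing over `t < T`, the values of `f` telescope to `f (θ 0) - f (θ T) ≤ f (θ 0) - B`.
-/

section Smooth

variable {E : Type*} [NormedAddCommGroup E] [InnerProductSpace ℝ E] [CompleteSpace E]
  {f : E → ℝ} {f' : E → E} {L : ℝ}

theorem le_add_inner_add_sq_of_lipschitz_gradient (hgrad : ∀ x, HasGradientAt f (f' x) x)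
    (hlip : ∀ x y : E, ‖f' x - f' y‖ ≤ L * ‖x - y‖) (x v : E) :
    f (x + v) ≤ f x + ⟪f' x, v⟫ + L / 2 * ‖v‖ ^ 2 := by
  -- The gap between the quadratic model and `f` along `t ↦ x + t • v` is antitone for `t ≥ 0`.
  set φ : ℝ → ℝ := fun t => f (x + t • v) - t * ⟪f' x, v⟫ - L / 2 * t ^ 2 * ‖v‖ ^ 2
  have hφ : ∀ t, HasDerivAt φ (⟪f' (x + t • v) - f' x, v⟫ - L * t * ‖v‖ ^ 2) t := by
    intro t
    have hline : HasDerivAt (fun s : ℝ => x + s • v) v t := by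
      simpa using ((hasDerivAt_id t).smul_const v).const_add x
    have hf := (hgrad (x + t • v)).hasFDerivAt.comp_hasDerivAt t hline
    rw [InnerProductSpace.toDual_apply_apply] at hf
    refine ((hf.sub ((hasDerivAt_id t).mul_const ⟪f' x, v⟫)).sub
      ((((hasDerivAt_id t).pow 2).const_mul (L / 2)).mul_const (‖v‖ ^ 2))).congr_deriv ?_
    simp only [inner_sub_left, id]
    ring
  have hanti : AntitoneOn φ (Set.Ici 0) := by
    refine antitoneOn_of_hasDerivWithinAt_nonpos (convex_Ici 0)
      (fun t _ => (hφ t).continuousAt.continuousWithinAt) (fun t _ => (hφ t).hasDerivWithinAt) ?_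
    intro t ht
    rw [interior_Ici, Set.mem_Ioi] at ht
    have hcs := real_inner_le_norm (f' (x + t • v) - f' x) v
    have hl : ‖f' (x + t • v) - f' x‖ ≤ L * (t * ‖v‖) := by
      simpa [norm_smul, abs_of_pos ht] using hlip (x + t • v) x
    nlinarith [norm_nonneg v]
  have h01 : φ 1 ≤ φ 0 := hanti Set.self_mem_Ici (Set.mem_Ici.2 zero_le_one) zero_le_one
  simp only [φ, one_smul, zero_smul, add_zero] at h01
  linarith

theorem le_sub_smul_of_lipschitz_gradient (hgrad : ∀ x, HasGradientAt f (f' x) x)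
    (hlip : ∀ x y : E, ‖f' x - f' y‖ ≤ L * ‖x - y‖) (η : ℝ) (x d : E) :
    f (x - η • d) ≤ f x - η * ⟪f' x, d⟫ + L / 2 * η ^ 2 * ‖d‖ ^ 2 := by
  have h := le_add_inner_add_sq_of_lipschitz_gradient hgrad hlip x (-(η • d))
  rwa [← sub_eq_add_neg, inner_neg_right, real_inner_smul_right, norm_neg, norm_smul,
    Real.norm_eq_abs, mul_pow, sq_abs, ← sub_eq_add_neg, ← mul_assoc] at h

end Smooth

theorem Finset.sum_range_le_sub_add_of_le_sub_succ {a u : ℕ → ℝ} {c : ℝ}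
    (h : ∀ t, a t ≤ u t - u (t + 1) + c) (T : ℕ) :
    ∑ t ∈ Finset.range T, a t ≤ u 0 - u T + T * c := by
  calc ∑ t ∈ Finset.range T, a t ≤ ∑ t ∈ Finset.range T, (u t - u (t + 1) + c) :=
        Finset.sum_le_sum fun t _ => h t
    _ = u 0 - u T + T * c := by
        rw [Finset.sum_add_distrib, Finset.sum_range_sub', Finset.sum_const, Finset.card_range,
          nsmul_eq_mul]

theorem fic_telescoped_bound_general
    {E : Type*} [NormedAddCommGroup E] [InnerProductSpace ℝ E] [CompleteSpace E]
    (f : E → ℝ) (f' : E → E) (hgrad : ∀ x, HasGradientAt f (f' x) x)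
    (L : ℝ) (hL : 0 ≤ L) (hlip : ∀ x y : E, ‖f' x - f' y‖ ≤ L * ‖x - y‖)
    (B : ℝ) (hB : ∀ z : E, B ≤ f z)
    (η : ℝ) (hη : 0 < η) (ε : ℝ)
    (θ : ℕ → E) (g : ℕ → E)
    (hupdate : ∀ t, θ (t + 1) = θ t - η • g t)
    (hg : ∀ t, ‖g t‖ ^ 2 ≤ ε) :
    ∀ T : ℕ, 1 ≤ T →
      (1 / (T : ℝ)) * ∑ t ∈ Finset.range T, ⟪f' (θ t), g t⟫ ≤
        (f (θ 0) - B) / (η * T) + L * ε * η / 2 := by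
  intro T hT
  have hT0 : (0 : ℝ) < T := Nat.cast_pos.2 hT
  have hstep : ∀ t, η * ⟪f' (θ t), g t⟫ ≤ f (θ t) - f (θ (t + 1)) + L * ε * η ^ 2 / 2 := by
    intro t
    have hdescent := le_sub_smul_of_lipschitz_gradient hgrad hlip η (θ t) (g t)
    have hnorm : L / 2 * η ^ 2 * ‖g t‖ ^ 2 ≤ L / 2 * η ^ 2 * ε := by gcongr; exact hg t
    rw [hupdate]
    linarith
  have hsum := Finset.sum_range_le_sub_add_of_le_sub_succ hstep T
  rw [← Finset.mul_sum] at hsum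
  calc 1 / (T : ℝ) * ∑ t ∈ Finset.range T, ⟪f' (θ t), g t⟫
      = (η * ∑ t ∈ Finset.range T, ⟪f' (θ t), g t⟫) / (η * T) := by field_simp
    _ ≤ (f (θ 0) - B + T * (L * ε * η ^ 2 / 2)) / (η * T) := by gcongr; linarith [hB (θ T)]
    _ = (f (θ 0) - B) / (η * T) + L * ε * η / 2 := by field_simp

theorem fic_telescoped_bound
    {E : Type*} [NormedAddCommGroup E] [InnerProductSpace ℝ E] [CompleteSpace E]
    (f : E → ℝ) (f' : E → E) (hgrad : ∀ x, HasGradientAt f (f' x) x)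
    (L : ℝ) (hL : 0 ≤ L) (hlip : ∀ x y : E, ‖f' x - f' y‖ ≤ L * ‖x - y‖)
    (B : ℝ) (hB : ∀ z : E, B ≤ f z)
    (η : ℝ) (hη : 0 < η) (ε : ℝ) (hε : 0 ≤ ε)
    (θ : ℕ → E) (g : ℕ → E)
    (hupdate : ∀ t, θ (t + 1) = θ t - η • g t)
    (hg : ∀ t, ‖g t‖ ^ 2 ≤ ε) :
    ∀ T : ℕ, 1 ≤ T →
      (1 / (T : ℝ)) * ∑ t ∈ Finset.range T, ⟪f' (θ t), g t⟫ ≤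
        (f (θ 0) - B) / (η * T) + L * ε * η / 2 :=
  fic_telescoped_bound_general f f' hgrad L hL hlip B hB η hη ε θ g hupdate hg
end
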